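/- arXiv:2203.13713 — 2 statements merged into one kernel-verified Lean document; each statement's English description precedes it below -/
import Mathlib

section
/- For every integer k ≥ 1 and any real numbers x_1, …, x_n ∈ [0,1] with x_1 + ⋯ + x_n = 1, we have p_k(x_1) + ⋯ + p_k(x_n) ≥ n · p_k(1/n). -/
/-!
Since `p k' x = k * (2k-1).choose k * (x (1 - x)) ^ (k - 1)` and `x (1 - x)` increases on
`[0, 1/2]`, `p k` is convex there. At most one `x i` exceeds `1/2`. If none does, Jensen's
inequality finishes. Otherwise let `y` be the large one and `N` the number of others: Jensen on
the others bounds the sum below by `p k y + N p k ((1 - y) / N)`, which is nondecreasing in `y`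
on `[1/2, 1]` because `(1 - y) / N ≤ 1 - y`. So the sum is at least its value
`p k (1/2) + N p k (1 / (2N))` at `y = 1/2`, and convexity at the two points `1/2`, `1 / (2N)`
gives `(N + 1) p k (1 / (N + 1))`.
-/

def p (k : ℕ) (x : ℝ) : ℝ :=
  ∑ ℓ ∈ Finset.range k, (Nat.choose (2*k-1) ℓ : ℝ) * x^(2*k-1-ℓ) * (1-x)^ℓ

open Finset

lemma hasDerivAt_choose_mul_pow_mul_one_sub_pow (m ℓ : ℕ) (x : ℝ) :
    HasDerivAt (fun y : ℝ => (m.choose ℓ : ℝ) * y ^ (m - ℓ) * (1 - y) ^ ℓ)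
      ((ℓ + 1) * m.choose (ℓ + 1) * x ^ (m - (ℓ + 1)) * (1 - x) ^ ℓ
        - ℓ * m.choose ℓ * x ^ (m - ℓ) * (1 - x) ^ (ℓ - 1)) x := by
  have h := ((hasDerivAt_pow (m - ℓ) x).const_mul (m.choose ℓ : ℝ)).mul
    (((hasDerivAt_id x).const_sub 1).pow ℓ)
  refine h.congr_deriv ?_
  have hc : ((m.choose (ℓ + 1) * (ℓ + 1) : ℕ) : ℝ) = (m.choose ℓ * (m - ℓ) : ℕ) :=
    congrArg _ (Nat.choose_succ_right_eq m ℓ)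
  push_cast at hc
  simp only [id, Pi.pow_apply, Nat.sub_sub]
  linear_combination -(x ^ (m - (ℓ + 1)) * (1 - x) ^ ℓ) * hc

lemma hasDerivAt_sum_range_choose_mul_pow (m r : ℕ) (x : ℝ) :
    HasDerivAt (fun y : ℝ => ∑ ℓ ∈ range r, (m.choose ℓ : ℝ) * y ^ (m - ℓ) * (1 - y) ^ ℓ)
      (r * m.choose r * x ^ (m - r) * (1 - x) ^ (r - 1)) x := by
  induction r with
  | zero => simpa using hasDerivAt_const x (0 : ℝ)
  | succ r ih =>
    simp only [sum_range_succ]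
    refine (ih.add (hasDerivAt_choose_mul_pow_mul_one_sub_pow m r x)).congr_deriv ?_
    push_cast
    ring

lemma hasDerivAt_p (k : ℕ) (x : ℝ) :
    HasDerivAt (p k) (k * (2 * k - 1).choose k * (x * (1 - x)) ^ (k - 1)) x := by
  refine (hasDerivAt_sum_range_choose_mul_pow (2 * k - 1) k x).congr_deriv ?_
  rw [show 2 * k - 1 - k = k - 1 by omega, mul_pow]
  ring

lemma mul_one_sub_le_mul_one_sub {a b : ℝ} (hab : a ≤ b) (hb : b ≤ 1 / 2) :
    a * (1 - a) ≤ b * (1 - b) := by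
  nlinarith

lemma convexOn_p (k : ℕ) : ConvexOn ℝ (Set.Icc 0 (1 / 2)) (p k) := by
  have hp : Differentiable ℝ (p k) := fun x => (hasDerivAt_p k x).differentiableAt
  refine MonotoneOn.convexOn_of_deriv (convex_Icc _ _) hp.continuous.continuousOn
    hp.differentiableOn ?_
  intro a ha b hb hab
  rw [interior_Icc] at ha hb
  rw [(hasDerivAt_p k a).deriv, (hasDerivAt_p k b).deriv]
  have ha' : 0 ≤ a * (1 - a) := mul_nonneg ha.1.le (by linarith [ha.2])
  exact mul_le_mul_of_nonneg_left
    (pow_le_pow_left₀ ha' (mul_one_sub_le_mul_one_sub hab hb.2.le) _) (by positivity)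

lemma ConvexOn.card_mul_map_sum_div_card_le {ι : Type*} {s : Set ℝ} {f : ℝ → ℝ}
    (hf : ConvexOn ℝ s f) (t : Finset ι) {z : ι → ℝ} (hz : ∀ i ∈ t, z i ∈ s) :
    (#t : ℝ) * f ((∑ i ∈ t, z i) / #t) ≤ ∑ i ∈ t, f (z i) := by
  rcases t.eq_empty_or_nonempty with rfl | ht
  · simp
  have hcard : (0 : ℝ) < #t := by exact_mod_cast ht.card_pos
  have h := hf.map_sum_le (t := t) (w := fun _ => (#t : ℝ)⁻¹) (fun _ _ => by positivity)
    (by simp [hcard.ne']) hz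
  simp only [smul_eq_mul, ← mul_sum] at h
  rw [div_eq_inv_mul]
  calc (#t : ℝ) * f ((#t : ℝ)⁻¹ * ∑ i ∈ t, z i)
      ≤ #t * ((#t : ℝ)⁻¹ * ∑ i ∈ t, f (z i)) := by gcongr
    _ = ∑ i ∈ t, f (z i) := by field_simp

lemma monotoneOn_p_add_mul_p_one_sub_div (k : ℕ) {N : ℝ} (hN : 1 ≤ N) :
    MonotoneOn (fun y => p k y + N * p k ((1 - y) / N)) (Set.Icc (1 / 2) 1) := by
  set c : ℝ := k * (2 * k - 1).choose k
  have hderiv : ∀ y, HasDerivAt (fun y => p k y + N * p k ((1 - y) / N))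
      (c * (y * (1 - y)) ^ (k - 1)
        - c * ((1 - y) / N * (1 - (1 - y) / N)) ^ (k - 1)) y := by
    intro y
    have hz : HasDerivAt (fun y : ℝ => (1 - y) / N) (-1 / N) y :=
      ((hasDerivAt_id y).const_sub 1).div_const N
    refine ((hasDerivAt_p k y).add
      (((hasDerivAt_p k _).comp y hz).const_mul N)).congr_deriv ?_
    field_simp
    ring
  refine monotoneOn_of_hasDerivWithinAt_nonneg (convex_Icc _ _)
    (HasDerivAt.continuousOn fun y _ => hderiv y) (fun y _ => (hderiv y).hasDerivWithinAt) ?_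
  intro y hy
  rw [interior_Icc] at hy
  have hz0 : 0 ≤ (1 - y) / N := div_nonneg (by linarith [hy.2]) (by linarith)
  have hzy : (1 - y) / N ≤ 1 - y := div_le_self (by linarith [hy.2]) hN
  have key := mul_one_sub_le_mul_one_sub hzy (by linarith [hy.1])
  rw [sub_sub_cancel, mul_comm (1 - y)] at key
  have hc : 0 ≤ c := by positivity
  rw [sub_nonneg]
  exact mul_le_mul_of_nonneg_left
    (pow_le_pow_left₀ (mul_nonneg hz0 (by linarith [hy.1])) key _) hc

lemma add_one_mul_p_one_div_add_one_le (k : ℕ) {N y : ℝ} (hN : 1 ≤ N)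
    (hy : y ∈ Set.Icc (1 / 2) 1) :
    (N + 1) * p k (1 / (N + 1)) ≤ p k y + N * p k ((1 - y) / N) := by
  have hN0 : 0 < N := by linarith
  have hmem : 1 / (2 * N) ∈ Set.Icc (0 : ℝ) (1 / 2) :=
    ⟨by positivity, by rw [div_le_div_iff₀ (by positivity) two_pos]; linarith⟩
  have hconv := (convexOn_p k).2 (Set.right_mem_Icc.2 (by norm_num)) hmem
    (by positivity : 0 ≤ 1 / (N + 1)) (by positivity : 0 ≤ N / (N + 1)) (by field_simp; ring)
  have hmid : 1 / (N + 1) * (1 / 2 : ℝ) + N / (N + 1) * (1 / (2 * N)) = 1 / (N + 1) := by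
    field_simp; ring
  simp only [smul_eq_mul, hmid] at hconv
  calc (N + 1) * p k (1 / (N + 1))
      ≤ (N + 1) * (1 / (N + 1) * p k (1 / 2) + N / (N + 1) * p k (1 / (2 * N))) := by gcongr
    _ = p k (1 / 2) + N * p k ((1 - 1 / 2) / N) := by field_simp; ring_nf
    _ ≤ p k y + N * p k ((1 - y) / N) :=
      monotoneOn_p_add_mul_p_one_sub_div k hN ⟨le_rfl, by norm_num⟩ hy hy.1

theorem sum_p_ge_general (k n : ℕ) (x : Fin n → ℝ)
    (hx : ∀ i, x i ∈ Set.Icc (0:ℝ) 1) (hsum : ∑ i, x i = 1) :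
    (n : ℝ) * p k (1 / n) ≤ ∑ i, p k (x i) := by
  by_cases hsmall : ∀ i, x i ≤ 1 / 2
  · simpa [hsum] using
      (convexOn_p k).card_mul_map_sum_div_card_le univ fun i _ => ⟨(hx i).1, hsmall i⟩
  push Not at hsmall
  obtain ⟨i₀, hi₀⟩ := hsmall
  rw [← add_sum_erase _ _ (mem_univ i₀)] at hsum ⊢
  set t := univ.erase i₀
  have hn : (n : ℝ) = #t + 1 := by simp [t, card_erase_of_mem, Nat.cast_sub i₀.pos]
  rcases t.eq_empty_or_nonempty with ht | ht
  · rw [ht, sum_empty, add_zero] at hsum ⊢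
    simp [hn, ht, hsum]
  have hN : (1 : ℝ) ≤ #t := by exact_mod_cast ht.card_pos
  have hJensen := (convexOn_p k).card_mul_map_sum_div_card_le t (z := x) fun i hi =>
    ⟨(hx i).1, by linarith [single_le_sum (fun j _ => (hx j).1) hi]⟩
  rw [show ∑ i ∈ t, x i = 1 - x i₀ by linarith] at hJensen
  calc (n : ℝ) * p k (1 / n) ≤ p k (x i₀) + #t * p k ((1 - x i₀) / #t) := by
        rw [hn]; exact add_one_mul_p_one_div_add_one_le k hN ⟨hi₀.le, (hx i₀).2⟩
    _ ≤ p k (x i₀) + ∑ i ∈ t, p k (x i) := by gcongr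

theorem sum_p_ge (k n : ℕ) (hk : 1 ≤ k) (hn : 1 ≤ n) (x : Fin n → ℝ)
    (hx : ∀ i, x i ∈ Set.Icc (0:ℝ) 1) (hsum : ∑ i, x i = 1) :
    (n : ℝ) * p k (1 / n) ≤ ∑ i, p k (x i) :=
  sum_p_ge_general k n x hx hsum
end

section
/- Let k ≥ 1 and x_1,…,x_{2k-1} ∈ [0,1]. Let Q(x_1,…,x_{2k-1}) be the probability that independent uniform random variables y_1,…,y_{2k-1} ∈ [0,1] satisfy y_i < x_i for at least k indices i. Then Q(x_1,…,x_{2k-1}) ≤ σ_k(x_1,…,x_{2k-1}). -/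
open MeasureTheory

def esymm (m ℓ : ℕ) (x : Fin m → ℝ) : ℝ :=
  ∑ I ∈ Finset.powersetCard ℓ (Finset.univ : Finset (Fin m)), ∏ i ∈ I, x i

/-- `Q k x` is the probability that independent uniform random variables
`y i ∈ [0,1]` satisfy `y i < x i` for at least `k` indices `i`. -/
noncomputable def Q (k : ℕ) (x : Fin (2*k-1) → ℝ) : ℝ :=
  (volume {y : Fin (2*k-1) → ℝ |
      (∀ i, y i ∈ Set.Icc (0:ℝ) 1) ∧
        k ≤ (Finset.univ.filter (fun i => y i < x i)).card}).toReal

/-!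
Union bound: if `y i < x i` for at least `k` indices, then this holds on some `k`-subset `I`,
so the event lies in the union over `|I| = k` of the boxes where `y i ∈ [0, x i)` for `i ∈ I`
and `y i ∈ [0, 1]` otherwise. Such a box has volume `∏ i ∈ I, x i`, and these volumes sum to
`σ_k(x)`.
-/

open Finset

section CornerBox

variable {ι : Type*} [Fintype ι] [DecidableEq ι]

def cornerBox (x : ι → ℝ) (I : Finset ι) : Set (ι → ℝ) :=
  Set.univ.pi fun i => if i ∈ I then Set.Ico 0 (x i) else Set.Icc 0 1

theorem volume_cornerBox {x : ι → ℝ} (hx : ∀ i, 0 ≤ x i) (I : Finset ι) :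
    volume (cornerBox x I) = ENNReal.ofReal (∏ i ∈ I, x i) := by
  have hfactor : ∀ i, volume (if i ∈ I then Set.Ico 0 (x i) else Set.Icc (0 : ℝ) 1) =
      if i ∈ I then ENNReal.ofReal (x i) else 1 := by
    intro i
    split_ifs <;> simp [Real.volume_Ico, Real.volume_Icc]
  rw [cornerBox, volume_pi_pi, prod_congr rfl fun i _ => hfactor i, prod_ite_mem, univ_inter,
    ENNReal.ofReal_prod_of_nonneg fun i _ => hx i]

theorem setOf_card_lt_subset_biUnion_cornerBox (k : ℕ) (x : ι → ℝ) :
    {y : ι → ℝ | (∀ i, y i ∈ Set.Icc (0 : ℝ) 1) ∧ k ≤ #{i | y i < x i}} ⊆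
      ⋃ I ∈ powersetCard k univ, cornerBox x I := by
  rintro y ⟨hy_unit, hk⟩
  obtain ⟨I, hI_sub, hI_card⟩ := exists_subset_card_eq hk
  refine Set.mem_iUnion₂.mpr ⟨I, mem_powersetCard.mpr ⟨subset_univ I, hI_card⟩, fun i _ => ?_⟩
  by_cases hi : i ∈ I
  · simpa only [hi, if_true] using ⟨(hy_unit i).1, (mem_filter.mp (hI_sub hi)).2⟩
  · simpa only [hi, if_false] using hy_unit i

end CornerBox

theorem esymm_nonneg {m : ℕ} (ℓ : ℕ) {x : Fin m → ℝ} (hx : ∀ i, 0 ≤ x i) :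
    0 ≤ esymm m ℓ x :=
  sum_nonneg fun _ _ => prod_nonneg fun i _ => hx i

theorem volume_setOf_card_lt_le_esymm {m : ℕ} (k : ℕ) {x : Fin m → ℝ} (hx : ∀ i, 0 ≤ x i) :
    volume {y : Fin m → ℝ | (∀ i, y i ∈ Set.Icc (0 : ℝ) 1) ∧ k ≤ #{i | y i < x i}} ≤
      ENNReal.ofReal (esymm m k x) :=
  calc _ ≤ ∑ I ∈ powersetCard k univ, volume (cornerBox x I) :=
        (measure_mono (setOf_card_lt_subset_biUnion_cornerBox k x)).trans
          (measure_biUnion_finset_le _ _)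
    _ = ENNReal.ofReal (esymm m k x) := by
        simp_rw [volume_cornerBox hx, esymm,
          ENNReal.ofReal_sum_of_nonneg fun I _ => prod_nonneg fun i _ => hx i]

theorem Q_le_esymm_general (k : ℕ) (x : Fin (2*k-1) → ℝ)
    (hx : ∀ i, x i ∈ Set.Icc (0:ℝ) 1) :
    Q k x ≤ esymm (2*k-1) k x :=
  ENNReal.toReal_le_of_le_ofReal (esymm_nonneg k fun i => (hx i).1)
    (volume_setOf_card_lt_le_esymm k fun i => (hx i).1)

theorem Q_le_esymm (k : ℕ) (hk : 1 ≤ k) (x : Fin (2*k-1) → ℝ)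
    (hx : ∀ i, x i ∈ Set.Icc (0:ℝ) 1) :
    Q k x ≤ esymm (2*k-1) k x :=
  Q_le_esymm_general k x hx
end
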